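/- arXiv:2604.02146 — 2 statements merged into one kernel-verified Lean document; each statement's English description precedes it below -/
import Mathlib

section
/- Let M be an invertible real n×n matrix with Bruhat decomposition M = U₁ P U₂. Then the column-permutation p_c associated to the permutation matrix P is given, for every i ∈ {1,…,n}, by p_c(i) = max{ j ∈ {1,…,n} : c_i(M,j) is not contained in the real linear span of the vectors c_1(M,j), c_2(M,j), …, c_{i-1}(M,j) } (for i = 1 the span of the empty family is the zero subspace). -/
/-- An `n × n` matrix is upper triangular if all entries below the diagonal vanish. -/
def IsUpperTriangular {n : ℕ} (U : Matrix (Fin n) (Fin n) ℝ) : Prop :=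
  ∀ i j : Fin n, j < i → U i j = 0

/-- The permutation matrix associated to a permutation `σ` of `{1,…,n}`:
its `(i,j)` entry is `1` iff `σ i = j`.  Its column-permutation is `σ⁻¹`:
the unique nonzero entry of column `i` lies in row `σ⁻¹ i`. -/
def permMatrix {n : ℕ} (σ : Equiv.Perm (Fin n)) : Matrix (Fin n) (Fin n) ℝ :=
  Matrix.of fun i j => if σ i = j then 1 else 0

/-- `c_i(M,j)`: the `i`-th column of `M` restricted to rows `j` through `n`. -/
def colRestrict {n : ℕ} (M : Matrix (Fin n) (Fin n) ℝ) (i j : Fin n) :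
    {k : Fin n // j ≤ k} → ℝ :=
  fun k => M k.1 i

namespace BruhatAux

variable {n : ℕ}

/-- The span of the restricted columns with index `< i`. -/
def spanPrev (Y : Matrix (Fin n) (Fin n) ℝ) (i j : Fin n) :
    Submodule ℝ ({k : Fin n // j ≤ k} → ℝ) :=
  Submodule.span ℝ (Set.range fun i' : {i' : Fin n // i' < i} => colRestrict Y i'.1 j)

lemma diag_ne_zero {U : Matrix (Fin n) (Fin n) ℝ} (hU : IsUpperTriangular U)
    (hdet : U.det ≠ 0) : ∀ k, U k k ≠ 0 := by
  have hbt : U.BlockTriangular id := fun i j h => hU i j h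
  rw [Matrix.det_of_upperTriangular hbt] at hdet
  intro k hk
  exact hdet (Finset.prod_eq_zero (Finset.mem_univ k) hk)

/-- Expansion of a restricted column of `X * U₂`. -/
lemma colRestrict_mul_right (X U₂ : Matrix (Fin n) (Fin n) ℝ) (i j : Fin n) :
    colRestrict (X * U₂) i j = ∑ m : Fin n, U₂ m i • colRestrict X m j := by
  funext k
  simp only [colRestrict, Matrix.mul_apply, Finset.sum_apply, Pi.smul_apply, smul_eq_mul]
  exact Finset.sum_congr rfl fun m _ => mul_comm _ _

lemma spanPrev_mul_right_eq (X U₂ : Matrix (Fin n) (Fin n) ℝ)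
    (hU₂ : IsUpperTriangular U₂) (hd : ∀ k, U₂ k k ≠ 0) (i j : Fin n) :
    spanPrev (X * U₂) i j = spanPrev X i j := by
  apply le_antisymm
  · rw [spanPrev, Submodule.span_le]
    rintro _ ⟨⟨i', hi'⟩, rfl⟩
    show colRestrict (X * U₂) i' j ∈ spanPrev X i j
    rw [colRestrict_mul_right]
    refine Submodule.sum_mem _ fun m _ => ?_
    rcases lt_or_ge i' m with h | h
    · rw [hU₂ m i' h, zero_smul]; exact Submodule.zero_mem _
    · exact Submodule.smul_mem _ _
        (Submodule.subset_span ⟨⟨m, lt_of_le_of_lt h hi'⟩, rfl⟩)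
  · rw [spanPrev, Submodule.span_le]
    rintro _ ⟨⟨i', hi'⟩, rfl⟩
    show colRestrict X i' j ∈ spanPrev (X * U₂) i j
    -- strong induction on `i'`
    suffices h : ∀ t : ℕ, ∀ i' : Fin n, i'.val = t → i' < i →
        colRestrict X i' j ∈ spanPrev (X * U₂) i j from h i'.val i' rfl hi'
    clear hi' i'
    intro t
    induction t using Nat.strong_induction_on with
    | _ t IHt =>
      intro i' ht hi'
      have IH : ∀ m : Fin n, m < i' → colRestrict X m j ∈ spanPrev (X * U₂) i j :=
        fun m hm => IHt m.val (ht ▸ hm) m rfl (lt_trans hm hi')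
      have hexp := colRestrict_mul_right X U₂ i' j
      have hsplit : colRestrict (X * U₂) i' j
          = U₂ i' i' • colRestrict X i' j
            + ∑ m ∈ Finset.univ.erase i', U₂ m i' • colRestrict X m j := by
        rw [hexp, ← Finset.add_sum_erase _ _ (Finset.mem_univ i')]
      have hsum : (∑ m ∈ Finset.univ.erase i', U₂ m i' • colRestrict X m j)
          ∈ spanPrev (X * U₂) i j := by
        refine Submodule.sum_mem _ fun m hm => ?_
        have hne : m ≠ i' := Finset.ne_of_mem_erase hm
        rcases lt_or_ge i' m with h | h
        · rw [hU₂ m i' h, zero_smul]; exact Submodule.zero_mem _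
        · have hlt : m < i' := lt_of_le_of_ne h hne
          exact Submodule.smul_mem _ _ (IH m hlt)
      have hgen : colRestrict (X * U₂) i' j ∈ spanPrev (X * U₂) i j :=
        Submodule.subset_span ⟨⟨i', hi'⟩, rfl⟩
      have : U₂ i' i' • colRestrict X i' j ∈ spanPrev (X * U₂) i j := by
        have : U₂ i' i' • colRestrict X i' j
            = colRestrict (X * U₂) i' j
              - ∑ m ∈ Finset.univ.erase i', U₂ m i' • colRestrict X m j := by
          rw [hsplit]; abel
        rw [this]
        exact Submodule.sub_mem _ hgen hsum
      exact (Submodule.smul_mem_iff _ (hd i')).mp this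

lemma mem_spanPrev_mul_right_iff (X U₂ : Matrix (Fin n) (Fin n) ℝ)
    (hU₂ : IsUpperTriangular U₂) (hd : ∀ k, U₂ k k ≠ 0) (i j : Fin n) :
    colRestrict (X * U₂) i j ∈ spanPrev (X * U₂) i j ↔
      colRestrict X i j ∈ spanPrev X i j := by
  rw [spanPrev_mul_right_eq X U₂ hU₂ hd i j]
  have hsum : (∑ m ∈ Finset.univ.erase i, U₂ m i • colRestrict X m j)
      ∈ spanPrev X i j := by
    refine Submodule.sum_mem _ fun m hm => ?_
    have hne : m ≠ i := Finset.ne_of_mem_erase hm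
    rcases lt_or_ge i m with h | h
    · rw [hU₂ m i h, zero_smul]; exact Submodule.zero_mem _
    · exact Submodule.smul_mem _ _
        (Submodule.subset_span ⟨⟨m, lt_of_le_of_ne h hne⟩, rfl⟩)
  have hsplit : colRestrict (X * U₂) i j
      = U₂ i i • colRestrict X i j
        + ∑ m ∈ Finset.univ.erase i, U₂ m i • colRestrict X m j := by
    rw [colRestrict_mul_right, ← Finset.add_sum_erase _ _ (Finset.mem_univ i)]
  rw [hsplit]
  constructor
  · intro h
    have := Submodule.sub_mem _ h hsum
    rw [add_sub_cancel_right] at this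
    exact (Submodule.smul_mem_iff _ (hd i)).mp this
  · intro h
    exact Submodule.add_mem _ (Submodule.smul_mem _ _ h) hsum

/-- The restriction of `U₁` to rows and columns `≥ j`. -/
def restrictUT (U₁ : Matrix (Fin n) (Fin n) ℝ) (j : Fin n) :
    Matrix {k : Fin n // j ≤ k} {k : Fin n // j ≤ k} ℝ :=
  fun k m => U₁ k.1 m.1

lemma colRestrict_mul_left (U₁ X : Matrix (Fin n) (Fin n) ℝ)
    (hU₁ : IsUpperTriangular U₁) (i j : Fin n) :
    colRestrict (U₁ * X) i j = (restrictUT U₁ j).mulVec (colRestrict X i j) := by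
  funext k
  simp only [colRestrict, Matrix.mul_apply, Matrix.mulVec, dotProduct, restrictUT]
  rw [← Finset.sum_subtype (Finset.univ.filter (fun m => j ≤ m))
    (fun m => by simp) (fun m => U₁ k.1 m * X m i)]
  refine (Finset.sum_subset (Finset.filter_subset _ _) fun m _ hm => ?_).symm
  have : m < j := by simpa using hm
  rw [hU₁ k.1 m (lt_of_lt_of_le this k.2), zero_mul]

lemma restrictUT_isUnit (U₁ : Matrix (Fin n) (Fin n) ℝ)
    (hU₁ : IsUpperTriangular U₁) (hd : ∀ k, U₁ k k ≠ 0) (j : Fin n) :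
    IsUnit (restrictUT U₁ j) := by
  rw [Matrix.isUnit_iff_isUnit_det, isUnit_iff_ne_zero]
  have hbt : (restrictUT U₁ j).BlockTriangular id := by
    intro k m h
    exact hU₁ k.1 m.1 h
  rw [Matrix.det_of_upperTriangular hbt]
  exact Finset.prod_ne_zero_iff.mpr fun k _ => hd k.1

lemma mem_spanPrev_mul_left_iff (U₁ X : Matrix (Fin n) (Fin n) ℝ)
    (hU₁ : IsUpperTriangular U₁) (hd : ∀ k, U₁ k k ≠ 0) (i j : Fin n) :
    colRestrict (U₁ * X) i j ∈ spanPrev (U₁ * X) i j ↔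
      colRestrict X i j ∈ spanPrev X i j := by
  have hinj : Function.Injective ((restrictUT U₁ j).mulVec ·) :=
    Matrix.mulVec_injective_iff_isUnit.mpr (restrictUT_isUnit U₁ hU₁ hd j)
  have hinj' : Function.Injective ((restrictUT U₁ j).mulVecLin) := hinj
  have hrange : (Set.range fun i' : {i' : Fin n // i' < i} => colRestrict (U₁ * X) i'.1 j)
      = (restrictUT U₁ j).mulVecLin ''
        (Set.range fun i' : {i' : Fin n // i' < i} => colRestrict X i'.1 j) := by
    rw [← Set.range_comp]
    refine congrArg Set.range (funext fun i' => ?_)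
    simp only [Function.comp, Matrix.mulVecLin_apply]
    exact colRestrict_mul_left U₁ X hU₁ i'.1 j
  rw [spanPrev, spanPrev, hrange, colRestrict_mul_left U₁ X hU₁ i j]
  exact Submodule.apply_mem_span_image_iff_mem_span (f := (restrictUT U₁ j).mulVecLin) hinj'

lemma perm_cond (σ : Equiv.Perm (Fin n)) (i j : Fin n) :
    (colRestrict (permMatrix σ) i j ∉ spanPrev (permMatrix σ) i j) ↔ j ≤ σ⁻¹ i := by
  constructor
  · intro h
    by_contra hle
    apply h
    have : colRestrict (permMatrix σ) i j = 0 := by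
      funext k
      have hk : σ k.1 ≠ i := by
        intro he
        apply hle
        have : (σ⁻¹ : Equiv.Perm (Fin n)) i = k.1 := by
          rw [← he]; exact σ.symm_apply_apply k.1
        rw [this]; exact k.2
      simp [colRestrict, permMatrix, hk]
    rw [this]
    exact Submodule.zero_mem _
  · intro hle h
    set k0 : {k : Fin n // j ≤ k} := ⟨σ⁻¹ i, hle⟩
    have hker : spanPrev (permMatrix σ) i j ≤
        LinearMap.ker (LinearMap.proj (R := ℝ) (φ := fun _ : {k : Fin n // j ≤ k} => ℝ) k0) := by
      rw [spanPrev, Submodule.span_le]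
      rintro _ ⟨⟨i', hi'⟩, rfl⟩
      have : σ ((σ⁻¹ : Equiv.Perm (Fin n)) i) = i := σ.apply_symm_apply i
      simp only [SetLike.mem_coe, LinearMap.mem_ker, LinearMap.proj_apply]
      show permMatrix σ k0.1 i' = 0
      simp only [permMatrix, Matrix.of_apply, k0, this]
      exact if_neg (ne_of_gt hi')
    have := hker h
    simp only [LinearMap.mem_ker, LinearMap.proj_apply] at this
    have hval : colRestrict (permMatrix σ) i j k0 = 1 := by
      simp [colRestrict, permMatrix, k0, σ.apply_symm_apply]
    rw [hval] at this
    exact one_ne_zero this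

end BruhatAux

open BruhatAux in
/-- For an invertible real matrix `M` with Bruhat decomposition `M = U₁ P U₂`
(where `P` is the permutation matrix of `σ`, so that the column-permutation of `P`
is `σ⁻¹`), the column-permutation is given by
`p_c(i) = max { j | c_i(M,j) ∉ span (c_1(M,j), …, c_{i-1}(M,j)) }`. -/
theorem bruhat_column_permutation_formula {n : ℕ}
    (M U₁ U₂ : Matrix (Fin n) (Fin n) ℝ) (σ : Equiv.Perm (Fin n))
    (hM : IsUnit M)
    (hU₁ : IsUpperTriangular U₁) (hU₂ : IsUpperTriangular U₂)
    (hBruhat : M = U₁ * permMatrix σ * U₂) :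
    ∀ i : Fin n,
      IsGreatest
        {j : Fin n |
          colRestrict M i j ∉
            Submodule.span ℝ
              (Set.range fun i' : {i' : Fin n // i' < i} => colRestrict M i'.1 j)}
        (σ⁻¹ i) := by
  have hdetM : M.det ≠ 0 := by
    intro h
    have := hM
    rw [Matrix.isUnit_iff_isUnit_det, h, isUnit_iff_ne_zero] at this
    exact this rfl
  have hdetfac : M.det = U₁.det * (permMatrix σ).det * U₂.det := by
    rw [hBruhat, Matrix.det_mul, Matrix.det_mul]
  have hd₁ : ∀ k, U₁ k k ≠ 0 := by
    apply diag_ne_zero hU₁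
    intro h
    rw [hdetfac, h] at hdetM
    simp at hdetM
  have hd₂ : ∀ k, U₂ k k ≠ 0 := by
    apply diag_ne_zero hU₂
    intro h
    rw [hdetfac, h] at hdetM
    simp at hdetM
  have key : ∀ i j : Fin n,
      (colRestrict M i j ∉ spanPrev M i j) ↔ j ≤ σ⁻¹ i := by
    intro i j
    have h1 : M = U₁ * (permMatrix σ * U₂) := by rw [hBruhat, mul_assoc]
    rw [h1]
    rw [not_iff_comm]
    rw [mem_spanPrev_mul_left_iff U₁ (permMatrix σ * U₂) hU₁ hd₁ i j,
      mem_spanPrev_mul_right_iff (permMatrix σ) U₂ hU₂ hd₂ i j]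
    rw [← not_iff_comm]
    exact perm_cond σ i j
  intro i
  constructor
  · exact (key i (σ⁻¹ i)).mpr le_rfl
  · intro j hj
    exact (key i j).mp hj
end

section
/- Let M be an invertible real n×n matrix with Bruhat decomposition M = U₁ P U₂. Then the row-permutation p_r associated to the permutation matrix P is given, for every i ∈ {1,…,n}, by p_r(i) = min{ j ∈ {1,…,n} : r_i(M,j) is not contained in the real linear span of the vectors r_{i+1}(M,j), r_{i+2}(M,j), …, r_n(M,j) } (for i = n the span of the empty family is the zero subspace). -/
/-- `r_i(M,j)`: the `i`-th row of `M` restricted to columns `1` through `j`. -/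
def rowRestrict {n : ℕ} (M : Matrix (Fin n) (Fin n) ℝ) (i j : Fin n) :
    {k : Fin n // k ≤ j} → ℝ :=
  fun k => M i k.1

lemma rowRestrict_mul {n : ℕ} (B A : Matrix (Fin n) (Fin n) ℝ) (i j : Fin n) :
    rowRestrict (B * A) i j = ∑ k : Fin n, B i k • rowRestrict A k j := by
  funext l
  simp [rowRestrict, Matrix.mul_apply, Finset.sum_apply]

/-- If `B` is upper triangular, the span of restricted rows `> i` of `B * A` is contained
in that of `A`. -/
lemma span_rows_mul_le {n : ℕ} (B A : Matrix (Fin n) (Fin n) ℝ)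
    (hB : IsUpperTriangular B) (i j : Fin n) :
    Submodule.span ℝ (Set.range fun i' : {i' : Fin n // i < i'} => rowRestrict (B * A) i'.1 j) ≤
    Submodule.span ℝ (Set.range fun i' : {i' : Fin n // i < i'} => rowRestrict A i'.1 j) := by
  rw [Submodule.span_le]
  rintro _ ⟨i', rfl⟩
  show rowRestrict (B * A) i'.1 j ∈ _
  rw [rowRestrict_mul]
  refine Submodule.sum_mem _ fun k _ => ?_
  by_cases hk : i < k
  · exact Submodule.smul_mem _ _ (Submodule.subset_span ⟨⟨k, hk⟩, rfl⟩)
  · have hz : B i'.1 k = 0 := hB _ _ (lt_of_le_of_lt (not_lt.1 hk) i'.2)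
    rw [hz, zero_smul]
    exact Submodule.zero_mem _

lemma permMul_apply {n : ℕ} (σ : Equiv.Perm (Fin n)) (U₂ : Matrix (Fin n) (Fin n) ℝ)
    (k l : Fin n) : (permMatrix σ * U₂) k l = U₂ (σ k) l := by
  simp [permMatrix, Matrix.mul_apply]

/-- Key lemma: row `i` of `P U₂` restricted to columns `≤ j` with `σ i ≤ j` is not in the
span of the restricted rows below it. -/
lemma keyNotMem {n : ℕ} (U₂ : Matrix (Fin n) (Fin n) ℝ) (σ : Equiv.Perm (Fin n))
    (hU₂ : IsUpperTriangular U₂) (hdiag : ∀ k, U₂ k k ≠ 0)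
    (i j : Fin n) (hij : σ i ≤ j) :
    rowRestrict (permMatrix σ * U₂) i j ∉
      Submodule.span ℝ (Set.range fun i' : {i' : Fin n // i < i'} =>
        rowRestrict (permMatrix σ * U₂) i'.1 j) := by
  classical
  intro hmem
  rw [Submodule.mem_span_range_iff_exists_fun] at hmem
  obtain ⟨c, hc⟩ := hmem
  set d : Fin n → ℝ :=
    fun k => (if k = i then (1 : ℝ) else 0) - (if h : i < k then c ⟨k, h⟩ else 0) with hd
  have hdi : d i = 1 := by simp [hd]
  -- the combination with coefficients `d` vanishes on columns `≤ j`
  have hsum : ∀ l : Fin n, l ≤ j → ∑ k : Fin n, d k * U₂ (σ k) l = 0 := by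
    intro l hl
    have h1 := congrFun hc ⟨l, hl⟩
    simp only [Finset.sum_apply, Pi.smul_apply, smul_eq_mul, rowRestrict] at h1
    -- h1 : ∑ i', c i' * (permMatrix σ * U₂) i'.1 l = (permMatrix σ * U₂) i l
    simp only [permMul_apply] at h1
    have h2 : ∑ k : Fin n, (if k = i then (1 : ℝ) else 0) * U₂ (σ k) l = U₂ (σ i) l := by
      rw [Finset.sum_eq_single i]
      · simp
      · intro b _ hb; simp [hb]
      · simp
    have h3 : ∑ k : Fin n, (if h : i < k then c ⟨k, h⟩ else 0) * U₂ (σ k) l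
        = ∑ i' : {i' : Fin n // i < i'}, c i' * U₂ (σ i'.1) l := by
      have hst := Finset.sum_subtype (p := fun k : Fin n => i < k) (F := inferInstance)
        (s := Finset.univ.filter fun k : Fin n => i < k) (by simp)
        (fun k => (if h : i < k then c ⟨k, h⟩ else 0) * U₂ (σ k) l)
      rw [← Finset.sum_filter_of_ne (s := Finset.univ)
        (p := fun k => i < k) (by intro k _ h; by_contra hik; simp [dif_neg hik] at h)]
      rw [hst]
      refine Finset.sum_congr rfl fun k _ => ?_
      rw [dif_pos k.2]
    simp only [hd, sub_mul, Finset.sum_sub_distrib, h2, h3, h1, sub_self]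
  -- pick `k₀` with `d k₀ ≠ 0` minimizing `σ k₀`
  have hTne : (Finset.univ.filter fun k => d k ≠ 0).Nonempty :=
    ⟨i, by simp [hdi]⟩
  obtain ⟨k₀, hk₀T, hk₀min⟩ := Finset.exists_min_image _ σ hTne
  have hdk₀ : d k₀ ≠ 0 := (Finset.mem_filter.1 hk₀T).2
  have hσk₀ : σ k₀ ≤ σ i := hk₀min i (by simp [hdi])
  have hcol : (σ k₀ : Fin n) ≤ j := le_trans hσk₀ hij
  have := hsum (σ k₀) hcol
  rw [Finset.sum_eq_single k₀] at this
  · exact hdk₀ (by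
      have := mul_eq_zero.1 this
      rcases this with h | h
      · exact h
      · exact absurd h (hdiag (σ k₀)))
  · intro b _ hb
    by_cases hdb : d b = 0
    · simp [hdb]
    · have hbT : b ∈ Finset.univ.filter fun k => d k ≠ 0 := by simp [hdb]
      have h1 : σ k₀ ≤ σ b := hk₀min b hbT
      have h2 : σ k₀ ≠ σ b := fun h => hb (σ.injective h.symm)
      have : σ k₀ < σ b := lt_of_le_of_ne h1 h2
      rw [hU₂ _ _ this, mul_zero]
  · simp

/-- For an invertible real matrix `M` with Bruhat decomposition `M = U₁ P U₂`
(where `P` is the permutation matrix of `σ`, so that the row-permutation of `P`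
is `σ`), the row-permutation is given by
`p_r(i) = min { j | r_i(M,j) ∉ span (r_{i+1}(M,j), …, r_n(M,j)) }`. -/
theorem bruhat_row_permutation_formula {n : ℕ}
    (M U₁ U₂ : Matrix (Fin n) (Fin n) ℝ) (σ : Equiv.Perm (Fin n))
    (hM : IsUnit M)
    (hU₁ : IsUpperTriangular U₁) (hU₂ : IsUpperTriangular U₂)
    (hBruhat : M = U₁ * permMatrix σ * U₂) :
    ∀ i : Fin n,
      IsLeast
        {j : Fin n |
          rowRestrict M i j ∉
            Submodule.span ℝ
              (Set.range fun i' : {i' : Fin n // i < i'} => rowRestrict M i'.1 j)}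
        (σ i) := by
  classical
  -- determinants
  have hdetM : IsUnit M.det := (Matrix.isUnit_iff_isUnit_det M).1 hM
  have hdet : IsUnit (U₁.det * ((permMatrix σ).det * U₂.det)) := by
    rw [← Matrix.det_mul, ← Matrix.det_mul, ← Matrix.mul_assoc, ← hBruhat]; exact hdetM
  have hdet1 : IsUnit U₁.det := isUnit_of_mul_isUnit_left hdet
  have hdet2 : IsUnit U₂.det := isUnit_of_mul_isUnit_right (isUnit_of_mul_isUnit_right hdet)
  have hbt1 : U₁.BlockTriangular id := fun i j h => hU₁ i j h
  have hbt2 : U₂.BlockTriangular id := fun i j h => hU₂ i j h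
  have hdiag1 : ∀ k, U₁ k k ≠ 0 := by
    intro k
    have : U₁.det = ∏ k, U₁ k k := Matrix.det_of_upperTriangular hbt1
    have hne : U₁.det ≠ 0 := hdet1.ne_zero
    rw [this] at hne
    exact fun h => hne (Finset.prod_eq_zero (Finset.mem_univ k) h)
  have hdiag2 : ∀ k, U₂ k k ≠ 0 := by
    intro k
    have : U₂.det = ∏ k, U₂ k k := Matrix.det_of_upperTriangular hbt2
    have hne : U₂.det ≠ 0 := hdet2.ne_zero
    rw [this] at hne
    exact fun h => hne (Finset.prod_eq_zero (Finset.mem_univ k) h)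
  set A : Matrix (Fin n) (Fin n) ℝ := permMatrix σ * U₂ with hAdef
  have hMA : M = U₁ * A := by rw [hBruhat, Matrix.mul_assoc]
  -- U₁⁻¹ is upper triangular
  haveI : Invertible U₁ := U₁.invertibleOfIsUnitDet hdet1
  have hinv : IsUpperTriangular U₁⁻¹ := by
    have := Matrix.blockTriangular_inv_of_blockTriangular hbt1
    exact fun i j h => this h
  have hA : A = U₁⁻¹ * M := by
    rw [hMA, ← Matrix.mul_assoc, Matrix.nonsing_inv_mul U₁ hdet1, Matrix.one_mul]
  -- span equality
  have hspan : ∀ i j : Fin n,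
      Submodule.span ℝ (Set.range fun i' : {i' : Fin n // i < i'} => rowRestrict M i'.1 j)
      = Submodule.span ℝ (Set.range fun i' : {i' : Fin n // i < i'} => rowRestrict A i'.1 j) := by
    intro i j
    refine le_antisymm ?_ ?_
    · rw [hMA]; exact span_rows_mul_le U₁ A hU₁ i j
    · conv_lhs => rw [hA]
      exact span_rows_mul_le U₁⁻¹ M hinv i j
  intro i
  constructor
  · -- σ i is in the set
    show rowRestrict M i (σ i) ∉ _
    intro hmem
    rw [hspan i (σ i)] at hmem
    have hkey := keyNotMem U₂ σ hU₂ hdiag2 i (σ i) le_rfl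
    rw [← hAdef] at hkey
    apply hkey
    have h1 : rowRestrict M i (σ i)
        = U₁ i i • rowRestrict A i (σ i)
          + ∑ k ∈ Finset.univ.erase i, U₁ i k • rowRestrict A k (σ i) := by
      rw [hMA, rowRestrict_mul, ← Finset.add_sum_erase _ _ (Finset.mem_univ i)]
    have h2 : (∑ k ∈ Finset.univ.erase i, U₁ i k • rowRestrict A k (σ i)) ∈
        Submodule.span ℝ
          (Set.range fun i' : {i' : Fin n // i < i'} => rowRestrict A i'.1 (σ i)) := by
      refine Submodule.sum_mem _ fun k hk => ?_
      have hki : k ≠ i := Finset.ne_of_mem_erase hk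
      rcases lt_or_gt_of_ne hki with h | h
      · rw [hU₁ i k h, zero_smul]; exact Submodule.zero_mem _
      · exact Submodule.smul_mem _ _ (Submodule.subset_span ⟨⟨k, h⟩, rfl⟩)
    have h3 := Submodule.sub_mem _ hmem h2
    rw [h1, add_sub_cancel_right] at h3
    exact (Submodule.smul_mem_iff _ (hdiag1 i)).1 h3
  · -- lower bound
    intro j hj
    by_contra hlt
    push_neg at hlt
    apply hj
    rw [hspan i j, hMA, rowRestrict_mul]
    refine Submodule.sum_mem _ fun k _ => ?_
    rcases lt_trichotomy k i with h | h | h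
    · rw [hU₁ i k h, zero_smul]; exact Submodule.zero_mem _
    · subst h
      have hz : rowRestrict A k j = 0 := by
        funext l
        have : (l.1 : Fin n) < σ k := lt_of_le_of_lt l.2 hlt
        simp only [rowRestrict, hAdef, permMul_apply]
        exact hU₂ _ _ this
      rw [hz, smul_zero]; exact Submodule.zero_mem _
    · exact Submodule.smul_mem _ _ (Submodule.subset_span ⟨⟨k, h⟩, rfl⟩)
end
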